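/- (Lemma 4b) Under the hypotheses of Lemma 4 (G a DAG, T_s a DFS arborescence rooted at s, z a proper tree-ancestor of w in T_s with tree path Z = (z = w'_0, ..., w'_{k-1} = w), s ∉ J(z, w'_i) for all internal i, and s ∈ J(z,w)), for every pair of vertices u ∈ T_z \ T_w and v ∈ T_w, we have s ∈ J(u,v). -/

import Mathlib

variable {V : Type*}

/-- A directed graph (given as a relation) is acyclic: no nontrivial closed directed walk. -/
def Acyclic (G : V → V → Prop) : Prop := Irreflexive (Relation.TransGen G)

/-- `l` is a directed path in `G` from `a` to `b`: consecutive vertices are joined by arcs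
of `G` and no vertex is repeated. -/
def IsDipath (G : V → V → Prop) (l : List V) (a b : V) : Prop :=
  l.Chain' G ∧ l.head? = some a ∧ l.getLast? = some b ∧ l.Nodup

/-- The internal vertices of a path (all vertices except the two endpoints). -/
def internalVerts (l : List V) : List V := l.tail.dropLast

/-- `s` is a junction of the pair of distinct vertices `u, v` in `G`: there are directed
paths from `s` to `u` and from `s` to `v` sharing no vertex other than `s`. -/
def IsJunction (G : V → V → Prop) (s u v : V) : Prop :=
  u ≠ v ∧ ∃ p q : List V, IsDipath G p s u ∧ IsDipath G q s v ∧
    ∀ x, x ∈ p → x ∈ q → x = s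

/-- `z` is the lowest common ancestor of `u` and `v` in the tree (arborescence) `T`:
a common ancestor that is a descendant of every common ancestor. -/
def IsTreeLCA (T : V → V → Prop) (u v z : V) : Prop :=
  Relation.ReflTransGen T z u ∧ Relation.ReflTransGen T z v ∧
    ∀ y, Relation.ReflTransGen T y u → Relation.ReflTransGen T y v →
      Relation.ReflTransGen T y z

/-- `s` is a lowest common ancestor of `u, v` in the DAG `G`: a junction of `u, v` such
that there is no directed path from `s` to any other junction of `u, v`. -/
def IsLCA (G : V → V → Prop) (s u v : V) : Prop :=
  IsJunction G s u v ∧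
    ∀ s', s' ≠ s → IsJunction G s' u v → ¬ Relation.TransGen G s s'

/-- A DFS arborescence of `G` rooted at `s`, spanning all descendants of `s`, together
with its post-order numbering and the standard structural properties of depth-first
search: tree arcs are graph arcs, the root has no parent, parents are unique, every
`G`-descendant of `s` is in the tree, `post` is injective on the tree, `post` strictly
decreases from a vertex to its proper tree descendants, the post-order numbers of each
subtree form a contiguous interval, and every graph arc between tree vertices is a
tree/forward arc, a back arc, or a (post-order decreasing) cross arc. -/
structure DFSArborescence (G : V → V → Prop) (s : V) where
  T : V → V → Prop
  post : V → ℕ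
  sub : ∀ ⦃a b⦄, T a b → G a b
  root_no_parent : ∀ a, ¬ T a s
  unique_parent : ∀ ⦃a b c⦄, T a b → T c b → a = c
  verts_reach : ∀ ⦃a b⦄, T a b → Relation.ReflTransGen T s a
  spans : ∀ ⦃v⦄, Relation.ReflTransGen G s v → Relation.ReflTransGen T s v
  post_inj : ∀ ⦃u v⦄, Relation.ReflTransGen T s u → Relation.ReflTransGen T s v →
      post u = post v → u = v
  post_desc : ∀ ⦃u v⦄, Relation.ReflTransGen T s u → Relation.TransGen T u v →
      post v < post u
  post_contig : ∀ ⦃u v x⦄, Relation.ReflTransGen T s u → Relation.ReflTransGen T u v →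
      Relation.ReflTransGen T s x → post v ≤ post x → post x ≤ post u →
      Relation.ReflTransGen T u x
  arc_classify : ∀ ⦃u v⦄, G u v → Relation.ReflTransGen T s u →
      Relation.ReflTransGen T s v →
      Relation.ReflTransGen T u v ∨ Relation.ReflTransGen T v u ∨ post v < post u

/-!
Let `P`, `Q` be paths from `s` to `z` and to `w` meeting only at `s`, and let `R`, `S` be the
tree paths from `z` to `u` and from `w` to `v`. If `Q` meets `R` only at `s`, then `P ++ R` and
`Q ++ S` witness the junction. Otherwise `Q` meets `R` at some `x ≠ s`; then `Q` up to `x`,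
followed by the tree path from `x` to `u`, is a path `U` to `u` that meets `P` only at `s` and
avoids the subtree of `w`. It meets the path `P ++ Z ++ S` to `v` only at `s`: a common vertex
strictly inside `Z` would make `s` a junction of `z` and that vertex, which is excluded.

All the incidences come from one observation: as tree arcs are arcs of the acyclic graph `G`,
a vertex on a path ending at `b` that is also a tree descendant of `b` must be `b` itself.
-/

open Relation

theorem List.exists_get_eq_of_mem_of_ne_head_of_ne_getLast {α : Type*} {l : List α}
    {a b x : α} (ha : l.head? = some a) (hb : l.getLast? = some b) (hx : x ∈ l)
    (hxa : x ≠ a) (hxb : x ≠ b) :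
    ∃ i, ∃ hi : i < l.length, 0 < i ∧ i < l.length - 1 ∧ l.get ⟨i, hi⟩ = x := by
  obtain ⟨i, hi, rfl⟩ := List.getElem_of_mem hx
  refine ⟨i, hi, Nat.pos_of_ne_zero ?_, ?_, rfl⟩
  · rintro rfl
    rw [List.head?_eq_getElem?, List.getElem?_eq_getElem hi] at ha
    exact hxa (Option.some.inj ha)
  · by_contra! hle
    rw [List.getLast?_eq_getElem?, show l.length - 1 = i by omega,
      List.getElem?_eq_getElem hi] at hb
    exact hxb (Option.some.inj hb)

theorem List.mem_or_mem_of_mem_append_tail {α : Type*} {p r : List α} {y : α}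
    (hy : y ∈ p ++ r.tail) : y ∈ p ∨ y ∈ r :=
  (List.mem_append.mp hy).imp id List.mem_of_mem_tail

section

variable {G T : V → V → Prop} {l p q r : List V} {a b c x : V}

theorem Acyclic.mono (hG : Acyclic G) (hTG : T ≤ G) : Acyclic T :=
  fun a h => hG a (TransGen.mono hTG _ _ h)

theorem Acyclic.eq_of_reflTransGen (hG : Acyclic G) (hab : ReflTransGen G a b)
    (hba : ReflTransGen G b a) : a = b := by
  rcases hab.cases_head with rfl | ⟨c, hac, hcb⟩
  · rfl
  · exact (hG a ((TransGen.head' hac hcb).trans_left hba)).elim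

namespace IsDipath

theorem ne_nil (h : IsDipath G l a b) : l ≠ [] := by
  rintro rfl
  simp [IsDipath] at h

theorem reflTransGen_head (h : IsDipath G l a b) (hx : x ∈ l) : ReflTransGen G a x := by
  have hhead : l.head h.ne_nil = a := by simpa [List.head?_eq_some_head h.ne_nil] using h.2.1
  exact h.1.induction (ReflTransGen G a ·) l (fun _ _ hyz hy => hy.tail hyz)
    (fun _ => hhead ▸ ReflTransGen.refl) x hx

theorem reflTransGen_getLast (h : IsDipath G l a b) (hx : x ∈ l) : ReflTransGen G x b := by
  have hlast : l.getLast h.ne_nil = b := by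
    simpa [List.getLast?_eq_some_getLast h.ne_nil] using h.2.2.1
  exact h.1.backwards_induction (ReflTransGen G · b) l (fun _ _ hyz hz => hz.head hyz)
    (fun _ => hlast ▸ ReflTransGen.refl) x hx

theorem getLast_mem (h : IsDipath G l a b) : b ∈ l := List.mem_of_mem_getLast? h.2.2.1

theorem mono (h : IsDipath T l a b) (hTG : T ≤ G) : IsDipath G l a b :=
  ⟨h.1.imp hTG, h.2⟩

theorem eq_of_mem_of_reflTransGen (hG : Acyclic G) (h : IsDipath G l a b) (hx : x ∈ l)
    (hbx : ReflTransGen G b x) : x = b :=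
  hG.eq_of_reflTransGen (h.reflTransGen_getLast hx) hbx

theorem exists_prefix (h : IsDipath G q a b) (hx : x ∈ q) :
    ∃ p, IsDipath G p a x ∧ p ⊆ q ∧ (x ≠ b → b ∉ p) := by
  obtain ⟨q₁, q₂, rfl⟩ := List.append_of_mem hx
  have hpre : q₁ ++ [x] <+: q₁ ++ x :: q₂ := ⟨q₂, by simp⟩
  obtain ⟨hc, hh, hl, hn⟩ := h
  refine ⟨q₁ ++ [x], ⟨hc.prefix hpre, ?_, List.getLast?_concat, hn.sublist hpre.sublist⟩,
    hpre.subset, fun hxb hb => ?_⟩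
  · cases q₁ <;> simpa using hh
  · have hb' : b ∈ x :: q₂ := by
      rw [List.getLast?_append_of_ne_nil _ (List.cons_ne_nil _ _)] at hl
      exact List.mem_of_mem_getLast? hl
    rcases List.mem_append.mp hb with hb | hb
    · exact List.disjoint_of_nodup_append hn hb hb'
    · exact hxb (List.mem_singleton.mp hb).symm

theorem append (hp : IsDipath G p a b) (hr : IsDipath G r b c)
    (hpr : ∀ y ∈ p, y ∈ r → y = b) : IsDipath G (p ++ r.tail) a c := by
  obtain ⟨hcp, hhp, hlp, hnp⟩ := hp
  obtain ⟨hcr, hhr, hlr, hnr⟩ := hr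
  obtain _ | ⟨b', r⟩ := r
  · simp at hhr
  obtain rfl : b' = b := Option.some.inj hhr
  have hglue := List.isChain_cons.mp hcr
  refine ⟨hcp.append hglue.2 ?_, ?_, ?_, ?_⟩
  · intro x hx y hy
    rw [hlp, Option.mem_some_iff] at hx
    exact hx ▸ hglue.1 y hy
  · cases p <;> simp_all
  · cases r with
    | nil =>
      obtain rfl : b' = c := by simpa using hlr
      simpa using hlp
    | cons d r => rwa [List.tail_cons, List.getLast?_append_of_ne_nil _ (List.cons_ne_nil _ _),
        ← List.getLast?_cons_cons]
  · refine List.nodup_append.mpr ⟨hnp, (List.nodup_cons.mp hnr).2, fun y hy y' hy' hyy => ?_⟩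
    subst hyy
    obtain rfl := hpr y hy (List.mem_cons_of_mem _ hy')
    exact (List.nodup_cons.mp hnr).1 hy'

end IsDipath

theorem Acyclic.exists_isDipath (hG : Acyclic G) (h : ReflTransGen G a b) :
    ∃ l, IsDipath G l a b := by
  induction h using ReflTransGen.head_induction_on with
  | refl => exact ⟨[b], List.isChain_singleton b, rfl, rfl, List.nodup_singleton b⟩
  | @head a c hac _ ih =>
    obtain ⟨l, hl⟩ := ih
    have hal : a ∉ l := fun ha => hG a (TransGen.head' hac (hl.reflTransGen_head ha))
    refine ⟨a :: l, List.isChain_cons.mpr ⟨?_, hl.1⟩, rfl, ?_,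
      List.nodup_cons.mpr ⟨hal, hl.2.2.2⟩⟩
    · intro y hy
      rw [hl.2.1, Option.mem_some_iff] at hy
      exact hy ▸ hac
    · obtain _ | ⟨d, t⟩ := l
      · exact absurd rfl hl.ne_nil
      · rw [List.getLast?_cons_cons]; exact hl.2.2.1

end

section

variable {G T : V → V → Prop} {s z w u v x : V} {P Q Z R U : List V}

theorem isJunction_append_tree_paths (hG : Acyclic G) (hTG : T ≤ G)
    (hP : IsDipath G P s z) (hQ : IsDipath G Q s w) (hPQ : ∀ t ∈ P, t ∈ Q → t = s)
    (hzw : ReflTransGen T z w) (hne : z ≠ w) (hR : IsDipath T R z u)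
    (hQR : ∀ t ∈ Q, t ∈ R → t = s) (hwu : ¬ ReflTransGen T w u)
    (hwv : ReflTransGen T w v) : IsJunction G s u v := by
  have hT := hG.mono hTG
  obtain ⟨S, hS⟩ := hT.exists_isDipath hwv
  have hPR : IsDipath G (P ++ R.tail) s u := hP.append (hR.mono hTG) fun t htP htR =>
    hP.eq_of_mem_of_reflTransGen hG htP (ReflTransGen.mono hTG _ _ (hR.reflTransGen_head htR))
  have hQS : IsDipath G (Q ++ S.tail) s v := hQ.append (hS.mono hTG) fun t htQ htS =>
    hQ.eq_of_mem_of_reflTransGen hG htQ (ReflTransGen.mono hTG _ _ (hS.reflTransGen_head htS))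
  refine ⟨fun huv => hwu (huv ▸ hwv), _, _, hPR, hQS, fun t htU htW => ?_⟩
  rcases List.mem_or_mem_of_mem_append_tail htU with htP | htR <;>
    rcases List.mem_or_mem_of_mem_append_tail htW with htQ | htS
  · exact hPQ t htP htQ
  · have hwt := hS.reflTransGen_head htS
    obtain rfl : t = z :=
      hP.eq_of_mem_of_reflTransGen hG htP (ReflTransGen.mono hTG _ _ (hzw.trans hwt))
    exact absurd (hT.eq_of_reflTransGen hzw hwt) hne
  · exact hQR t htQ htR
  · exact absurd ((hS.reflTransGen_head htS).trans (hR.reflTransGen_getLast htR)) hwu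

theorem exists_dipath_avoiding_subtree (hG : Acyclic G) (hTG : T ≤ G)
    (hP : IsDipath G P s z) (hQ : IsDipath G Q s w) (hPQ : ∀ t ∈ P, t ∈ Q → t = s)
    (hxQ : x ∈ Q) (hxs : x ≠ s) (hzx : ReflTransGen T z x) (hxu : ReflTransGen T x u)
    (hwu : ¬ ReflTransGen T w u) :
    ∃ U, IsDipath G U s u ∧ (∀ t ∈ P, t ∈ U → t = s) ∧ ∀ t ∈ U, ¬ ReflTransGen T w t := by
  have hT := hG.mono hTG
  obtain ⟨p, hp, hpQ, hwp⟩ := hQ.exists_prefix hxQ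
  replace hwp : w ∉ p := hwp fun hxw => hwu (hxw ▸ hxu)
  obtain ⟨X, hX⟩ := hT.exists_isDipath hxu
  refine ⟨p ++ X.tail, hp.append (hX.mono hTG) fun t htp htX => ?_, fun t htP htU => ?_,
    fun t htU hwt => ?_⟩
  · exact hp.eq_of_mem_of_reflTransGen hG htp
      (ReflTransGen.mono hTG _ _ (hX.reflTransGen_head htX))
  · rcases List.mem_or_mem_of_mem_append_tail htU with htp | htX
    · exact hPQ t htP (hpQ htp)
    · have hxt := hX.reflTransGen_head htX
      obtain rfl : t = z :=
        hP.eq_of_mem_of_reflTransGen hG htP (ReflTransGen.mono hTG _ _ (hzx.trans hxt))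
      obtain rfl : x = t := hT.eq_of_reflTransGen hxt hzx
      exact absurd (hPQ x hP.getLast_mem hxQ) hxs
  · rcases List.mem_or_mem_of_mem_append_tail htU with htp | htX
    · obtain rfl : t = w :=
        hQ.eq_of_mem_of_reflTransGen hG (hpQ htp) (ReflTransGen.mono hTG _ _ hwt)
      exact hwp htp
    · exact hwu (hwt.trans (hX.reflTransGen_getLast htX))

theorem isJunction_of_dipath_avoiding_subtree (hG : Acyclic G) (hTG : T ≤ G)
    (hP : IsDipath G P s z) (hZ : IsDipath T Z z w)
    (hinner : ∀ t ∈ Z, t ≠ z → t ≠ w → ¬ IsJunction G s z t)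
    (hU : IsDipath G U s u) (hPU : ∀ t ∈ P, t ∈ U → t = s)
    (hUw : ∀ t ∈ U, ¬ ReflTransGen T w t) (hwv : ReflTransGen T w v) :
    IsJunction G s u v := by
  have hT := hG.mono hTG
  obtain ⟨S, hS⟩ := hT.exists_isDipath hwv
  have hZS : IsDipath T (Z ++ S.tail) z v := hZ.append hS fun t htZ htS =>
    hZ.eq_of_mem_of_reflTransGen hT htZ (hS.reflTransGen_head htS)
  have hPZS : IsDipath G (P ++ (Z ++ S.tail).tail) s v := hP.append (hZS.mono hTG)
    fun t htP ht => hP.eq_of_mem_of_reflTransGen hG htP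
      (ReflTransGen.mono hTG _ _ (hZS.reflTransGen_head ht))
  refine ⟨fun huv => hUw u hU.getLast_mem (huv ▸ hwv), U, _, hU, hPZS, fun t htU ht => ?_⟩
  rcases List.mem_or_mem_of_mem_append_tail ht with htP | htZS
  · exact hPU t htP htU
  rcases List.mem_or_mem_of_mem_append_tail htZS with htZ | htS
  · by_cases htz : t = z
    · exact hPU t (htz ▸ hP.getLast_mem) htU
    have htw : t ≠ w := fun htw => hUw t htU (htw ▸ .refl)
    obtain ⟨U', hU', hU'U, -⟩ := hU.exists_prefix htU
    exact absurd ⟨Ne.symm htz, P, U', hP, hU', fun y hyP hyU' => hPU y hyP (hU'U hyU')⟩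
      (hinner t htZ htz htw)
  · exact absurd (hS.reflTransGen_head htS) (hUw t htU)

end

theorem stmt11_general (G : V → V → Prop) (hG : Acyclic G) (s : V) (A : DFSArborescence G s) (z w : V)
    (Z : List V) (hZ : IsDipath A.T Z z w)
    (hnot : ∀ i (hi : i < Z.length), 0 < i → i < Z.length - 1 →
      ¬ IsJunction G s z (Z.get ⟨i, hi⟩))
    (hJ : IsJunction G s z w) :
    ∀ u v, Relation.ReflTransGen A.T z u → ¬ Relation.ReflTransGen A.T w u →
      Relation.ReflTransGen A.T w v → IsJunction G s u v := by
  intro u v hzu hwu hwv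
  obtain ⟨hne, P, Q, hP, hQ, hPQ⟩ := hJ
  have hTG : A.T ≤ G := fun _ _ h => A.sub h
  have hinner : ∀ t ∈ Z, t ≠ z → t ≠ w → ¬ IsJunction G s z t := fun t ht htz htw => by
    obtain ⟨i, hi, h0, hlt, rfl⟩ :=
      List.exists_get_eq_of_mem_of_ne_head_of_ne_getLast hZ.2.1 hZ.2.2.1 ht htz htw
    exact hnot i hi h0 hlt
  obtain ⟨R, hR⟩ := (hG.mono hTG).exists_isDipath hzu
  by_cases hQR : ∀ t ∈ Q, t ∈ R → t = s
  · exact isJunction_append_tree_paths hG hTG hP hQ hPQ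
      (hZ.reflTransGen_head hZ.getLast_mem) hne hR hQR hwu hwv
  push Not at hQR
  obtain ⟨x, hxQ, hxR, hxs⟩ := hQR
  obtain ⟨U, hU, hPU, hUw⟩ := exists_dipath_avoiding_subtree hG hTG hP hQ hPQ hxQ hxs
    (hR.reflTransGen_head hxR) (hR.reflTransGen_getLast hxR) hwu
  exact isJunction_of_dipath_avoiding_subtree hG hTG hP hZ hinner hU hPU hUw hwv

/-- Lemma 4b: under the hypotheses of Lemma 4, `s ∈ J(u,v)` for every
`u ∈ T_z \\ T_w` and `v ∈ T_w`. -/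
theorem stmt11 (G : V → V → Prop) (hG : Acyclic G) (s : V) (A : DFSArborescence G s)
    (s1 : V) (h1 : A.T s s1) (z w : V)
    (hz : Relation.ReflTransGen A.T s1 z) (hw : Relation.ReflTransGen A.T s1 w)
    (Z : List V) (hZ : IsDipath A.T Z z w) (hlen : 2 ≤ Z.length)
    (hnot : ∀ i (hi : i < Z.length), 0 < i → i < Z.length - 1 →
      ¬ IsJunction G s z (Z.get ⟨i, hi⟩))
    (hJ : IsJunction G s z w) :
    ∀ u v, Relation.ReflTransGen A.T z u → ¬ Relation.ReflTransGen A.T w u →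
      Relation.ReflTransGen A.T w v → IsJunction G s u v :=
  stmt11_general G hG s A z w Z hZ hnot hJ
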